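/- Let u be uniformly distributed on the unit sphere of R^N and let s_1,...,s_N be nonnegative constants satisfying s_k ≤ b·s̄ for all k, where s̄ = N^{-1}∑_k s_k > 0. Then for every t > 0, Pr{∑_{k=1}^N s_k u_k² ≥ s̄(1 + t)} ≤ exp(-N t² / (4b(b+t))) and Pr{∑_{k=1}^N s_k u_k² ≤ s̄(1 - t)} ≤ exp(-N t² / (4b(b+t))). -/

import Mathlib

open MeasureTheory

/-- The uniform (normalized Haar) probability measure on the unit sphere of `ℝ^N`. -/
noncomputable def sphereUniform (N : ℕ) :
    Measure (Metric.sphere (0 : EuclideanSpace ℝ (Fin N)) 1) :=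
  ((volume : Measure (EuclideanSpace ℝ (Fin N))).toSphere Set.univ)⁻¹ •
    (volume : Measure (EuclideanSpace ℝ (Fin N))).toSphere

/-!
Chernoff's method in polar coordinates. For `a : Fin N → ℝ` the event `{∑ a_k u_k² ≥ 0}` is the
trace on the sphere of a cone `C`, so its probability is the Gaussian mass `∫_C e^{-‖x‖²}` divided
by `π^{N/2}`. On `C`, `e^{-‖x‖²} ≤ e^{-∑ (1 - λ a_k) x_k²}` for every `λ ≥ 0`, and the right side
integrates to `∏ (π / (1 - λ a_k))^{1/2}`; hence the probability is at most `∏ (1 - λ a_k)^{-1/2}`.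
When `a_k ≤ B`, `∑ a_k ≤ -N r` and `∑ a_k² ≤ N B²`, the choice `λ = r / (B (B + r))` together
with `-log (1 - y) ≤ y + y² / (2 (1 - c))` for `y ≤ c = λ B` bounds this by
`exp (-N r² / (4 B (B + r)))`.
Both tails are of this form, with `a_k = s_k - (s̄ + r)` and `a_k = (s̄ - r) - s_k`, and the
relative statement is the case `B = b s̄`, `r = t s̄`.
-/

open Real Set
open scoped ENNReal

theorem lintegral_ofReal_exp_neg_sum_mul_sq {ι : Type*} [Fintype ι] {c : ι → ℝ}
    (hc : ∀ k, 0 < c k) :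
    ∫⁻ x : EuclideanSpace ℝ ι, ENNReal.ofReal (exp (-∑ k, c k * x k ^ 2))
      = ENNReal.ofReal (∏ k, √(π / c k)) := by
  have hprod : ∀ y : ι → ℝ, exp (-∑ k, c k * y k ^ 2) = ∏ k, exp (-c k * y k ^ 2) := fun y ↦ by
    rw [← Finset.sum_neg_distrib, exp_sum]
    simp only [neg_mul]
  rw [← (PiLp.volume_preserving_toLp ι).lintegral_comp_emb
    (MeasurableEquiv.toLp 2 _).measurableEmbedding]
  simp only [hprod]
  have hint : Integrable (fun y : ι → ℝ ↦ ∏ k, exp (-c k * y k ^ 2)) :=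
    Integrable.fintype_prod fun k ↦ integrable_exp_neg_mul_sq (hc k)
  refine (ofReal_integral_eq_lintegral_ofReal hint
      (.of_forall fun y ↦ Finset.prod_nonneg fun k _ ↦ (exp_pos _).le)).symm.trans ?_
  rw [integral_fintype_prod_volume_eq_prod (f := fun k x ↦ exp (-c k * x ^ 2))]
  simp only [integral_gaussian]

theorem lintegral_ofReal_exp_neg_norm_sq {ι : Type*} [Fintype ι] :
    ∫⁻ x : EuclideanSpace ℝ ι, ENNReal.ofReal (exp (-‖x‖ ^ 2))
      = ENNReal.ofReal (√π ^ Fintype.card ι) := by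
  have hnorm : ∀ x : EuclideanSpace ℝ ι, ‖x‖ ^ 2 = ∑ k, 1 * x k ^ 2 := fun x ↦ by
    simp [EuclideanSpace.norm_sq_eq]
  simp only [hnorm, lintegral_ofReal_exp_neg_sum_mul_sq fun _ ↦ one_pos, div_one,
    Finset.prod_const, Finset.card_univ]

theorem MeasureTheory.Measure.toSphere_mul_lintegral_volumeIoiPow {E : Type*}
    [NormedAddCommGroup E] [NormedSpace ℝ E] [FiniteDimensional ℝ E] [Nontrivial E]
    [MeasurableSpace E] [BorelSpace E] (μ : Measure E) [μ.IsAddHaarMeasure] {C : Set E}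
    (hC : MeasurableSet C) (hcone : ∀ x, ∀ c : ℝ, 0 < c → (c • x ∈ C ↔ x ∈ C))
    {f : ℝ → ℝ≥0∞} (hf : Measurable f) :
    μ.toSphere {u | (u : E) ∈ C}
        * ∫⁻ r, f r ∂(Measure.volumeIoiPow (Module.finrank ℝ E - 1))
      = ∫⁻ x in C, f ‖x‖ ∂μ := by
  have hA : MeasurableSet {u : Metric.sphere (0 : E) 1 | (u : E) ∈ C} :=
    hC.preimage measurable_subtype_coe
  let F : Metric.sphere (0 : E) 1 × Ioi (0 : ℝ) → ℝ≥0∞ :=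
    fun p ↦ {u : Metric.sphere (0 : E) 1 | (u : E) ∈ C}.indicator 1 p.1 * f p.2
  have hF : ∀ x : ({0}ᶜ : Set E), F (homeomorphUnitSphereProd E x) = C.indicator (f ‖·‖) x := by
    rintro ⟨x, hx⟩
    have hmem : ‖x‖⁻¹ • x ∈ C ↔ x ∈ C := hcone x _ (inv_pos.2 (norm_pos_iff.2 hx))
    by_cases hxC : x ∈ C <;> simp [F, hxC, hmem, indicator]
  conv_rhs => rw [← lintegral_indicator hC, ← restrict_compl_singleton (μ := μ) 0,
    ← lintegral_subtype_comap (measurableSet_singleton _).compl]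
  simp only [← hF]
  rw [μ.measurePreserving_homeomorphUnitSphereProd.lintegral_comp_emb
      (Homeomorph.measurableEmbedding _),
    lintegral_prod_mul (measurable_one.indicator hA).aemeasurable
      (g := fun r : Ioi (0 : ℝ) ↦ f r) (hf.comp measurable_subtype_coe).aemeasurable,
    lintegral_indicator_one hA]

theorem sphereUniform_mul_lintegral_norm {N : ℕ} (hN : 0 < N) {C : Set (EuclideanSpace ℝ (Fin N))}
    (hC : MeasurableSet C) (hcone : ∀ x, ∀ c : ℝ, 0 < c → (c • x ∈ C ↔ x ∈ C))
    {f : ℝ → ℝ≥0∞} (hf : Measurable f) :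
    sphereUniform N {u | (u : EuclideanSpace ℝ (Fin N)) ∈ C}
        * ∫⁻ x : EuclideanSpace ℝ (Fin N), f ‖x‖
      = ∫⁻ x in C, f ‖x‖ := by
  have : Nonempty (Fin N) := ⟨⟨0, hN⟩⟩
  set μ := (volume : Measure (EuclideanSpace ℝ (Fin N)))
  have hU0 : μ.toSphere univ ≠ 0 := Measure.measure_univ_ne_zero.2 μ.toSphere_ne_zero
  have hUtop : μ.toSphere univ ≠ ⊤ := measure_ne_top _ _
  have huniv := μ.toSphere_mul_lintegral_volumeIoiPow MeasurableSet.univ (fun _ _ _ ↦ Iff.rfl) hf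
  simp only [mem_univ, ofPred_true, Measure.restrict_univ] at huniv
  rw [← μ.toSphere_mul_lintegral_volumeIoiPow hC hcone hf, ← huniv, sphereUniform,
    Measure.smul_apply, smul_eq_mul, mul_mul_mul_comm, ENNReal.inv_mul_cancel hU0 hUtop, one_mul]

theorem sphereUniform_quadratic_nonneg_le_prod {N : ℕ} (hN : 0 < N) (a : Fin N → ℝ) {l : ℝ}
    (hl : 0 ≤ l) (hla : ∀ k, l * a k < 1) :
    sphereUniform N {u | 0 ≤ ∑ k, a k * (u : EuclideanSpace ℝ (Fin N)) k ^ 2}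
      ≤ ENNReal.ofReal (∏ k, √(1 - l * a k))⁻¹ := by
  set C := {x : EuclideanSpace ℝ (Fin N) | 0 ≤ ∑ k, a k * x k ^ 2}
  have hC : MeasurableSet C := measurableSet_le measurable_const (by fun_prop)
  have hcone : ∀ x, ∀ c : ℝ, 0 < c → (c • x ∈ C ↔ x ∈ C) := by
    intro x c hc
    have : ∑ k, a k * (c • x) k ^ 2 = c ^ 2 * ∑ k, a k * x k ^ 2 := by
      simp only [PiLp.smul_apply, smul_eq_mul, Finset.mul_sum]
      exact Finset.sum_congr rfl fun k _ ↦ by ring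
    simp only [C, mem_ofPred_eq, this]
    exact mul_nonneg_iff_of_pos_left (by positivity)
  have hf : Measurable fun r : ℝ ↦ ENNReal.ofReal (exp (-r ^ 2)) := by fun_prop
  have hgauss := lintegral_ofReal_exp_neg_norm_sq (ι := Fin N)
  rw [Fintype.card_fin] at hgauss
  have hK0 : ENNReal.ofReal (√π ^ N) ≠ 0 := by simp [pi_pos]
  have htilt : ∫⁻ x in C, ENNReal.ofReal (exp (-‖x‖ ^ 2))
      ≤ ∫⁻ x : EuclideanSpace ℝ (Fin N), ENNReal.ofReal (exp (-∑ k, (1 - l * a k) * x k ^ 2)) := by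
    refine (setLIntegral_mono' hC fun x hx ↦ ENNReal.ofReal_le_ofReal (exp_le_exp.2 ?_)).trans
      (setLIntegral_le_lintegral _ _)
    have : ∑ k, (1 - l * a k) * x k ^ 2 = ‖x‖ ^ 2 - l * ∑ k, a k * x k ^ 2 := by
      simp only [EuclideanSpace.norm_sq_eq, Real.norm_eq_abs, sq_abs, Finset.mul_sum,
        ← Finset.sum_sub_distrib]
      exact Finset.sum_congr rfl fun k _ ↦ by ring
    rw [this]
    nlinarith [mul_nonneg hl (show 0 ≤ ∑ k, a k * x k ^ 2 from hx)]
  change sphereUniform N {u | (u : EuclideanSpace ℝ (Fin N)) ∈ C} ≤ _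
  rw [← ENNReal.mul_le_mul_iff_left hK0 ENNReal.ofReal_ne_top, ← hgauss,
    sphereUniform_mul_lintegral_norm hN hC hcone hf, hgauss]
  refine htilt.trans_eq ?_
  rw [lintegral_ofReal_exp_neg_sum_mul_sq fun k ↦ sub_pos.2 (hla k), ← ENNReal.ofReal_mul
    (inv_nonneg.2 (Finset.prod_nonneg fun k _ ↦ sqrt_nonneg _))]
  congr 1
  rw [Finset.prod_congr rfl fun k _ ↦ sqrt_div' π (sub_pos.2 (hla k)).le, Finset.prod_div_distrib,
    Finset.prod_const, Finset.card_univ, Fintype.card_fin, div_eq_inv_mul]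

namespace Real

theorem neg_log_one_sub_le {y c : ℝ} (hc0 : 0 ≤ c) (hc1 : c < 1) (hy : y ≤ c) :
    -log (1 - y) ≤ y + y ^ 2 / (2 * (1 - c)) := by
  -- `f' x = x (c - x) / ((1 - c) (1 - x))` has the sign of `x` on `(-∞, c]`, so `f ≥ f 0 = 0`.
  set f : ℝ → ℝ := fun x ↦ log (1 - x) + (x + x ^ 2 / (2 * (1 - c)))
  have hf' : ∀ x ∈ Iio 1,
      HasDerivAt f (x * (c - x) / ((1 - c) * (1 - x))) x := by
    intro x (hx : x < 1)
    refine ((((hasDerivAt_id' x).const_sub 1).log (by linarith)).add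
      ((hasDerivAt_id' x).add ((hasDerivAt_pow 2 x).div_const (2 * (1 - c))))).congr_deriv ?_
    field_simp [show 1 - x ≠ 0 by linarith, show 1 - c ≠ 0 by linarith]
    ring
  have hcont : ContinuousOn f (Iic c) := fun x hx ↦
    (hf' x (lt_of_le_of_lt hx hc1)).continuousAt.continuousWithinAt
  have hderiv {D : Set ℝ} (hD : D ⊆ Iic c) : ∀ x ∈ interior D,
      HasDerivWithinAt f (x * (c - x) / ((1 - c) * (1 - x))) (interior D) x :=
    fun x hx ↦ (hf' x (lt_of_le_of_lt (hD (interior_subset hx)) hc1)).hasDerivWithinAt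
  have hf0 : f 0 = 0 := by simp [f]
  suffices 0 ≤ f y by simp only [f] at this; linarith
  rcases le_total y 0 with hy0 | hy0
  · have hanti : AntitoneOn f (Iic 0) :=
      antitoneOn_of_hasDerivWithinAt_nonpos (convex_Iic 0) (hcont.mono (Iic_subset_Iic.2 hc0))
        (hderiv (Iic_subset_Iic.2 hc0)) fun x hx ↦ by
          rw [interior_Iic] at hx
          have : x < 0 := hx
          exact div_nonpos_of_nonpos_of_nonneg (by nlinarith) (by nlinarith)
    simpa [hf0] using hanti hy0 self_mem_Iic hy0
  · have hmono : MonotoneOn f (Icc 0 c) :=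
      monotoneOn_of_hasDerivWithinAt_nonneg (convex_Icc 0 c) (hcont.mono Icc_subset_Iic_self)
        (hderiv Icc_subset_Iic_self) fun x hx ↦ by
          rw [interior_Icc] at hx
          exact div_nonneg (mul_nonneg hx.1.le (by linarith [hx.2]))
            (mul_nonneg (by linarith) (by linarith [hx.2]))
    simpa [hf0] using hmono (left_mem_Icc.2 hc0) ⟨hy0, hy⟩ hy0

end Real

theorem prod_sqrt_one_sub_inv_le_exp {ι : Type*} [Fintype ι] (a : ι → ℝ) {B r : ℝ}
    (hB : 0 < B) (hr : 0 < r) (ha : ∀ k, a k ≤ B)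
    (hsum : ∑ k, a k ≤ -(Fintype.card ι * r)) (hsq : ∑ k, a k ^ 2 ≤ Fintype.card ι * B ^ 2) :
    (∏ k, √(1 - r / (B * (B + r)) * a k))⁻¹
      ≤ exp (-(Fintype.card ι * r ^ 2) / (4 * B * (B + r))) := by
  set n : ℝ := (Fintype.card ι : ℝ)
  set l := r / (B * (B + r))
  set c := r / (B + r)
  have hl : 0 < l := by positivity
  have hc0 : 0 ≤ c := by positivity
  have hc1 : c < 1 := (div_lt_one (by positivity)).2 (by linarith)
  have hla : ∀ k, l * a k ≤ c := fun k ↦ by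
    calc l * a k ≤ l * B := mul_le_mul_of_nonneg_left (ha k) hl.le
      _ = c := by simp only [l, c]; field_simp
  have hpos : ∀ k, 0 < 1 - l * a k := fun k ↦ by linarith [hla k]
  have hlog : ∑ k, -log (1 - l * a k) ≤ l * ∑ k, a k + l ^ 2 / (2 * (1 - c)) * ∑ k, a k ^ 2 := by
    rw [Finset.mul_sum, Finset.mul_sum, ← Finset.sum_add_distrib]
    refine Finset.sum_le_sum fun k _ ↦ (neg_log_one_sub_le hc0 hc1 (hla k)).trans_eq ?_
    ring
  have hbound : l * ∑ k, a k + l ^ 2 / (2 * (1 - c)) * ∑ k, a k ^ 2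
      ≤ -(n * r ^ 2) / (2 * B * (B + r)) := by
    calc l * ∑ k, a k + l ^ 2 / (2 * (1 - c)) * ∑ k, a k ^ 2
        ≤ l * -(n * r) + l ^ 2 / (2 * (1 - c)) * (n * B ^ 2) := by
          gcongr
      _ = -(n * r ^ 2) / (2 * B * (B + r)) := by
          have h1c : 1 - c = B / (B + r) := by simp only [c]; field_simp; ring
          rw [h1c]
          simp only [l]
          field_simp
          ring
  rw [← log_le_iff_le_exp (inv_pos.2 (Finset.prod_pos fun k _ ↦ sqrt_pos.2 (hpos k))), log_inv,
    log_prod fun k _ ↦ (sqrt_pos.2 (hpos k)).ne']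
  simp only [log_sqrt (hpos _).le]
  have halve : -(n * r ^ 2) / (4 * B * (B + r)) = -(n * r ^ 2) / (2 * B * (B + r)) / 2 := by
    field_simp; ring
  rw [← Finset.sum_div, halve]
  rw [Finset.sum_neg_distrib] at hlog
  linarith

theorem sphereUniform_quadratic_nonneg_le_exp {N : ℕ} (hN : 0 < N) (a : Fin N → ℝ) {B r : ℝ}
    (hB : 0 < B) (hr : 0 < r) (ha : ∀ k, a k ≤ B) (hsum : ∑ k, a k ≤ -(N * r))
    (hsq : ∑ k, a k ^ 2 ≤ N * B ^ 2) :
    sphereUniform N {u | 0 ≤ ∑ k, a k * (u : EuclideanSpace ℝ (Fin N)) k ^ 2}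
      ≤ ENNReal.ofReal (exp (-(N * r ^ 2) / (4 * B * (B + r)))) := by
  have hla : ∀ k, r / (B * (B + r)) * a k < 1 := fun k ↦
    calc r / (B * (B + r)) * a k ≤ r / (B * (B + r)) * B := by gcongr; exact ha k
      _ = r / (B + r) := by field_simp
      _ < 1 := (div_lt_one (by positivity)).2 (by linarith)
  refine (sphereUniform_quadratic_nonneg_le_prod hN a (by positivity) hla).trans
    (ENNReal.ofReal_le_ofReal ?_)
  simpa using prod_sqrt_one_sub_inv_le_exp a hB hr ha (by simpa using hsum) (by simpa using hsq)

theorem sum_sub_sq_le {ι : Type*} [Fintype ι] {s : ι → ℝ} {B : ℝ} (hs : ∀ k, 0 ≤ s k)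
    (hsB : ∀ k, s k ≤ B) (m : ℝ) :
    ∑ k, (s k - m) ^ 2 ≤ Fintype.card ι * m ^ 2 + (B - 2 * m) * ∑ k, s k := by
  calc ∑ k, (s k - m) ^ 2 ≤ ∑ k, (m ^ 2 + (B - 2 * m) * s k) :=
        Finset.sum_le_sum fun k _ ↦ by nlinarith [mul_le_mul_of_nonneg_left (hsB k) (hs k)]
    _ = Fintype.card ι * m ^ 2 + (B - 2 * m) * ∑ k, s k := by
        rw [Finset.sum_add_distrib, ← Finset.mul_sum, Finset.sum_const, Finset.card_univ,
          nsmul_eq_mul]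

theorem sum_sq_eq_one_of_mem_sphere {ι : Type*} [Fintype ι] {u : EuclideanSpace ℝ ι}
    (hu : u ∈ Metric.sphere 0 1) : ∑ k, u k ^ 2 = 1 := by
  have := EuclideanSpace.norm_sq_eq u
  rw [mem_sphere_zero_iff_norm.1 hu] at this
  simpa [sq_abs] using this.symm

section MeanDeviation

variable {N : ℕ} {s : Fin N → ℝ} {B r : ℝ}

theorem sphereUniform_mean_add_le_quadratic (hN : 0 < N) (hs : ∀ k, 0 ≤ s k)
    (hsB : ∀ k, s k ≤ B) (hr : 0 < r) :
    sphereUniform N {u | (1 / N : ℝ) * ∑ k, s k + r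
        ≤ ∑ k, s k * (u : EuclideanSpace ℝ (Fin N)) k ^ 2}
      ≤ ENNReal.ofReal (exp (-(N * r ^ 2) / (4 * B * (B + r)))) := by
  set m := (1 / N : ℝ) * ∑ k, s k + r
  have hNpos : (0 : ℝ) < N := Nat.cast_pos.2 hN
  have hsum : ∑ k, s k = N * (m - r) := by simp only [m]; field_simp; ring
  have hmean : 0 ≤ m - r := by
    simp only [m, add_sub_cancel_right]
    exact mul_nonneg (by positivity) (Finset.sum_nonneg fun k _ ↦ hs k)
  by_cases hmB : m ≤ B
  · convert sphereUniform_quadratic_nonneg_le_exp hN (fun k ↦ s k - m) (by linarith) hr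
      (fun k ↦ by linarith [hsB k]) ?_ ((sum_sub_sq_le hs hsB m).trans ?_) using 2
    · ext u
      simp [sub_mul, Finset.sum_sub_distrib, ← Finset.mul_sum, sum_sq_eq_one_of_mem_sphere u.2]
    · simp only [Finset.sum_sub_distrib, Finset.sum_const, Finset.card_univ, Fintype.card_fin,
        nsmul_eq_mul, hsum]
      linarith
    · simp only [Fintype.card_fin, hsum]
      nlinarith [mul_nonneg (mul_nonneg (sub_nonneg.2 hmB) (show 0 ≤ B + r by linarith)) hNpos.le,
        mul_nonneg (mul_nonneg hmean hr.le) hNpos.le]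
  · have hQ : ∀ u : Metric.sphere (0 : EuclideanSpace ℝ (Fin N)) 1,
        ¬ m ≤ ∑ k, s k * (u : EuclideanSpace ℝ (Fin N)) k ^ 2 := fun u hu ↦ hmB <| hu.trans <|
      calc ∑ k, s k * (u : EuclideanSpace ℝ (Fin N)) k ^ 2
          ≤ ∑ k, B * (u : EuclideanSpace ℝ (Fin N)) k ^ 2 := by gcongr; exact hsB _
        _ = B := by rw [← Finset.mul_sum, sum_sq_eq_one_of_mem_sphere u.2, mul_one]
    simp [hQ]

theorem sphereUniform_quadratic_le_mean_sub (hN : 0 < N) (hs : ∀ k, 0 ≤ s k)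
    (hsB : ∀ k, s k ≤ B) (hr : 0 < r) :
    sphereUniform N {u | ∑ k, s k * (u : EuclideanSpace ℝ (Fin N)) k ^ 2
        ≤ (1 / N : ℝ) * ∑ k, s k - r}
      ≤ ENNReal.ofReal (exp (-(N * r ^ 2) / (4 * B * (B + r)))) := by
  set m := (1 / N : ℝ) * ∑ k, s k - r
  have hNpos : (0 : ℝ) < N := Nat.cast_pos.2 hN
  have hsum : ∑ k, s k = N * (m + r) := by simp only [m]; field_simp; ring
  have hmeanB : m + r ≤ B := by
    have : ∑ k, s k ≤ ∑ _k : Fin N, B := Finset.sum_le_sum fun k _ ↦ hsB k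
    rw [hsum, Finset.sum_const, Finset.card_univ, Fintype.card_fin, nsmul_eq_mul] at this
    exact le_of_mul_le_mul_left this hNpos
  by_cases hm : 0 ≤ m
  · convert sphereUniform_quadratic_nonneg_le_exp hN (fun k ↦ m - s k) (by linarith) hr
      (fun k ↦ by linarith [hs k]) ?_ ((le_trans ?_ (sum_sub_sq_le hs hsB m)).trans ?_) using 2
    · ext u
      simp [sub_mul, Finset.sum_sub_distrib, ← Finset.mul_sum, sum_sq_eq_one_of_mem_sphere u.2]
    · simp only [Finset.sum_sub_distrib, Finset.sum_const, Finset.card_univ, Fintype.card_fin,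
        nsmul_eq_mul, hsum]
      linarith
    · exact (Finset.sum_congr rfl fun k _ ↦ by ring).le
    · simp only [Fintype.card_fin, hsum]
      nlinarith [mul_nonneg (mul_nonneg (sub_nonneg.2 hmeanB) (by linarith : 0 ≤ B)) hNpos.le,
        mul_nonneg (mul_nonneg hm (by linarith : 0 ≤ m + 2 * r)) hNpos.le]
  · have hQ : ∀ u : Metric.sphere (0 : EuclideanSpace ℝ (Fin N)) 1,
        ¬ ∑ k, s k * (u : EuclideanSpace ℝ (Fin N)) k ^ 2 ≤ m := fun u hu ↦
      hm (le_trans (Finset.sum_nonneg fun k _ ↦ mul_nonneg (hs k) (sq_nonneg _)) hu)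
    simp [hQ]

end MeanDeviation

theorem sphere_quadratic_relative_deviation_general (N : ℕ) (s : Fin N → ℝ) (b t : ℝ)
    (hs : ∀ k, 0 ≤ s k)
    (hmean : 0 < (1 / N : ℝ) * ∑ k, s k)
    (hsb : ∀ k, s k ≤ b * ((1 / N : ℝ) * ∑ k, s k))
    (ht : 0 < t) :
    sphereUniform N
        {u | ((1 / N : ℝ) * ∑ k, s k) * (1 + t) ≤
          ∑ k, s k * ((u : EuclideanSpace ℝ (Fin N)) k) ^ 2}
      ≤ ENNReal.ofReal (Real.exp (-(N * t ^ 2) / (4 * b * (b + t)))) ∧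
    sphereUniform N
        {u | ∑ k, s k * ((u : EuclideanSpace ℝ (Fin N)) k) ^ 2 ≤
          ((1 / N : ℝ) * ∑ k, s k) * (1 - t)}
      ≤ ENNReal.ofReal (Real.exp (-(N * t ^ 2) / (4 * b * (b + t)))) := by
  set sbar := (1 / N : ℝ) * ∑ k, s k
  have hN : 0 < N := Nat.pos_of_ne_zero fun h ↦ by simp [sbar, h] at hmean
  have hexp : -(N * (sbar * t) ^ 2) / (4 * (b * sbar) * (b * sbar + sbar * t))
      = -(N * t ^ 2) / (4 * b * (b + t)) := by
    rw [← mul_div_mul_right (-(N * t ^ 2)) _ (pow_ne_zero 2 hmean.ne')]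
    ring
  rw [mul_one_add, mul_one_sub, ← hexp]
  exact ⟨sphereUniform_mean_add_le_quadratic hN hs hsb (mul_pos hmean ht),
    sphereUniform_quadratic_le_mean_sub hN hs hsb (mul_pos hmean ht)⟩

/-- For `u` uniform on the unit sphere of `ℝ^N` and nonnegative constants
`s_k ≤ b s̄` where `s̄ = N⁻¹ ∑ s_k > 0`, for every `t > 0` both
`Pr{∑ s_k u_k² ≥ s̄ (1 + t)}` and `Pr{∑ s_k u_k² ≤ s̄ (1 - t)}` are bounded by
`exp (-N t² / (4 b (b + t)))`. -/
theorem sphere_quadratic_relative_deviation (N : ℕ) (hN : 0 < N) (s : Fin N → ℝ) (b t : ℝ)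
    (hs : ∀ k, 0 ≤ s k)
    (hmean : 0 < (1 / N : ℝ) * ∑ k, s k)
    (hsb : ∀ k, s k ≤ b * ((1 / N : ℝ) * ∑ k, s k))
    (ht : 0 < t) :
    sphereUniform N
        {u | ((1 / N : ℝ) * ∑ k, s k) * (1 + t) ≤
          ∑ k, s k * ((u : EuclideanSpace ℝ (Fin N)) k) ^ 2}
      ≤ ENNReal.ofReal (Real.exp (-(N * t ^ 2) / (4 * b * (b + t)))) ∧
    sphereUniform N
        {u | ∑ k, s k * ((u : EuclideanSpace ℝ (Fin N)) k) ^ 2 ≤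
          ((1 / N : ℝ) * ∑ k, s k) * (1 - t)}
      ≤ ENNReal.ofReal (Real.exp (-(N * t ^ 2) / (4 * b * (b + t)))) :=
  sphere_quadratic_relative_deviation_general N s b t hs hmean hsb ht
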